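/- Let s ∈ ℝ and r ∈ ℝ, q ∈ (0,∞), with r > 1 (or q = ∞ and r ≥ 1). Define the generalized Carleson measure sequence norm ‖t‖_{cmo^{s,q}_r} = sup_{P dyadic} ( |P|^{-r} ∫_P Σ_{Q⊂P} [ |Q|^{-s/n-1/2} |t_Q| χ_Q(x) ]^q dx )^{1/q}. Then ‖t‖_{cmo^{s,q}_r} is equivalent to sup_{Q dyadic} |Q|^{-s/n-(r-1)/q-1/2} |t_Q|, i.e., cmo^{s,q}_r coincides with the Triebel-Lizorkin sequence space ḟ^{s+n(r-1)/q}_{∞,∞} with equivalent norms. -/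

import Mathlib

open MeasureTheory ENNReal

/-- A dyadic cube `Q_{jk} = 2^{-j}([0,1)^n + k)` in `ℝⁿ`, recorded by its
generation `j ∈ ℤ` and position `k ∈ ℤⁿ`. -/
structure DyadicCube (n : ℕ) where
  j : ℤ
  k : Fin n → ℤ

namespace DyadicCube

/-- The dyadic cube as a subset of `ℝⁿ`. -/
def toSet {n : ℕ} (Q : DyadicCube n) : Set (Fin n → ℝ) :=
  {x | ∀ i, (Q.k i : ℝ) * (2 : ℝ) ^ (-Q.j) ≤ x i ∧
        x i < ((Q.k i : ℝ) + 1) * (2 : ℝ) ^ (-Q.j)}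

/-- The Lebesgue measure `|Q| = 2^{-jn}` of a dyadic cube, as an element of `ℝ≥0∞`. -/
noncomputable def vol {n : ℕ} (Q : DyadicCube n) : ℝ≥0∞ :=
  (2 : ℝ≥0∞) ^ (-(Q.j : ℝ) * n)

/-- The characteristic function `χ_Q`, with values in `ℝ≥0∞`. -/
noncomputable def ind {n : ℕ} (Q : DyadicCube n) (x : Fin n → ℝ) : ℝ≥0∞ :=
  Q.toSet.indicator (fun _ => (1 : ℝ≥0∞)) x

end DyadicCube

open DyadicCube

/-- The coefficient `|Q|^{-s/n - 1/2}`. -/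
noncomputable def coeff {n : ℕ} (s : ℝ) (Q : DyadicCube n) : ℝ≥0∞ :=
  Q.vol ^ (-(s / (n : ℝ)) - 1 / 2)

/-- The `ℓ^q`-norm `(Σ_i a_i^q)^{1/q}` of a family of extended nonnegative reals,
with the usual modification (`sup`) when `q = ∞`. -/
noncomputable def lqSum {ι : Type*} (q : ℝ≥0∞) (a : ι → ℝ≥0∞) : ℝ≥0∞ :=
  if q = ∞ then ⨆ i, a i else (∑' i, a i ^ q.toReal) ^ (1 / q.toReal)

/-- The `L^p`-norm `(∫_A g^p dx)^{1/p}` over a set `A ⊆ ℝⁿ`, with the usual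
modification (`sup` over `x ∈ A`) when `p = ∞`. -/
noncomputable def lpIntOn {n : ℕ} (p : ℝ≥0∞) (A : Set (Fin n → ℝ))
    (g : (Fin n → ℝ) → ℝ≥0∞) : ℝ≥0∞ :=
  if p = ∞ then ⨆ x ∈ A, g x
  else (∫⁻ x in A, g x ^ p.toReal) ^ (1 / p.toReal)

/-- The Triebel–Lizorkin-type sequence norm
`‖t‖_{ḟ^{s,τ}_{p,q}} = sup_P |P|^{-τ} ( ∫_P ( Σ_{Q ⊆ P} [|Q|^{-s/n-1/2} |t_Q| χ_Q(x)]^q )^{p/q} dx )^{1/p}`,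
with the usual modifications when `p = ∞` or `q = ∞`. -/
noncomputable def fNorm (n : ℕ) (s τ : ℝ) (p q : ℝ≥0∞) (t : DyadicCube n → ℂ) : ℝ≥0∞ :=
  ⨆ P : DyadicCube n, P.vol ^ (-τ) *
    lpIntOn p P.toSet fun x =>
      lqSum q fun Q : {Q : DyadicCube n // Q.toSet ⊆ P.toSet} =>
        coeff s Q.1 * ‖t Q.1‖₊ * ind Q.1 x

/-- The Besov-type sequence norm
`‖t‖_{ḃ^{s,τ}_{p,q}} = sup_P |P|^{-τ} ( Σ_{j ≥ j_P} ( ∫_P [ Σ_{Q ⊆ P, ℓ(Q)=2^{-j}} |Q|^{-s/n-1/2} |t_Q| χ_Q(x) ]^p dx )^{q/p} )^{1/q}`,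
with the usual modifications when `p = ∞` or `q = ∞`. -/
noncomputable def bNorm (n : ℕ) (s τ : ℝ) (p q : ℝ≥0∞) (t : DyadicCube n → ℂ) : ℝ≥0∞ :=
  ⨆ P : DyadicCube n, P.vol ^ (-τ) *
    lqSum q fun j : {j : ℤ // P.j ≤ j} =>
      lpIntOn p P.toSet fun x =>
        ∑' Q : {Q : DyadicCube n // Q.toSet ⊆ P.toSet ∧ Q.j = j.1},
          coeff s Q.1 * ‖t Q.1‖₊ * ind Q.1 x

/-- The `ḟ^{σ}_{∞,∞} = ḃ^{σ}_{∞,∞}` sequence norm `sup_Q |Q|^{-σ/n - 1/2} |t_Q|`. -/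
noncomputable def supNorm (n : ℕ) (σ : ℝ) (t : DyadicCube n → ℂ) : ℝ≥0∞ :=
  ⨆ Q : DyadicCube n, coeff σ Q * ‖t Q‖₊

/-- The test sequence with `t_{R_j} = |R_j|^{s/n + 1/2 + τ - 1/p}` for
`R_j = [0,2^{-j})^n` (the dyadic cube with `k = 0`), and `t_Q = 0` otherwise. -/
noncomputable def testSeq (n : ℕ) (s τ p : ℝ) : DyadicCube n → ℂ := fun Q =>
  if Q.k = 0 then
    ((((2 : ℝ) ^ (-(Q.j : ℝ) * n)) ^ (s / n + 1 / 2 + τ - 1 / p) : ℝ) : ℂ)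
  else 0

/-- The cube `R_j = [0, 2^{-j})^n`. -/
def Rcube (n : ℕ) (j : ℤ) : DyadicCube n := ⟨j, 0⟩

/-- The generalized Carleson measure sequence norm
`‖t‖_{cmo^{s,q}_r} = sup_P ( |P|^{-r} ∫_P Σ_{Q⊆P} [ |Q|^{-s/n-1/2} |t_Q| χ_Q(x) ]^q dx )^{1/q}`,
with the usual modification (suprema over `x ∈ P` and over `Q ⊆ P`) when `q = ∞`. -/
noncomputable def cmoNorm (n : ℕ) (s : ℝ) (q : ℝ≥0∞) (r : ℝ)
    (t : DyadicCube n → ℂ) : ℝ≥0∞ :=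
  if q = ∞ then
    ⨆ P : DyadicCube n, ⨆ x ∈ P.toSet,
      ⨆ Q : {Q : DyadicCube n // Q.toSet ⊆ P.toSet},
        coeff s Q.1 * ‖t Q.1‖₊ * ind Q.1 x
  else
    ⨆ P : DyadicCube n,
      (P.vol ^ (-r) *
        ∫⁻ x in P.toSet,
          ∑' Q : {Q : DyadicCube n // Q.toSet ⊆ P.toSet},
            (coeff s Q.1 * ‖t Q.1‖₊ * ind Q.1 x) ^ q.toReal) ^ (1 / q.toReal)

/-!
With `σ = s + n(r-1)/q` one has `|Q|^{-s/n-1/2} = |Q|^{-σ/n-1/2} |Q|^{(r-1)/q}`. Testing the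
Carleson condition on `P = Q` and keeping only the term `Q` gives the lower bound. For the upper
bound, with `M = sup_Q |Q|^{-σ/n-1/2} |t_Q|`, each term is at most `M^q |Q|^{r-1} χ_Q`; for fixed
`x ∈ P` the cubes `Q ⊆ P` containing `x` are one per generation `j ≥ j_P`, so
`Σ_{Q ⊆ P} |Q|^{r-1} χ_Q(x) ≤ |P|^{r-1} / (1 - 2^{-n(r-1)})` (finite as `r > 1`), and integrating
over `P` gives `|P|^r`. For `q = ∞` the two norms coincide.
-/

namespace DyadicCube

variable {n : ℕ}

lemma vol_ne_zero (Q : DyadicCube n) : Q.vol ≠ 0 :=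
  (ENNReal.rpow_pos (by norm_num) (by norm_num)).ne'

lemma vol_ne_top (Q : DyadicCube n) : Q.vol ≠ ∞ := by
  simp [vol, ENNReal.rpow_eq_top_iff]

lemma vol_rpow_add (Q : DyadicCube n) (y z : ℝ) :
    Q.vol ^ (y + z) = Q.vol ^ y * Q.vol ^ z :=
  ENNReal.rpow_add y z Q.vol_ne_zero Q.vol_ne_top

lemma vol_rpow_neg_mul_rpow (Q : DyadicCube n) (y : ℝ) : Q.vol ^ (-y) * Q.vol ^ y = 1 := by
  rw [← vol_rpow_add, neg_add_cancel, ENNReal.rpow_zero]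

lemma vol_rpow_of_j_eq_add {P Q : DyadicCube n} {m : ℕ} (hQ : Q.j = P.j + m) (y : ℝ) :
    Q.vol ^ y = P.vol ^ y * ((2 : ℝ≥0∞) ^ (-((n : ℝ) * y))) ^ m := by
  rw [vol, vol, ← ENNReal.rpow_natCast, ← ENNReal.rpow_mul, ← ENNReal.rpow_mul,
    ← ENNReal.rpow_mul, ← ENNReal.rpow_add _ _ (by norm_num) (by norm_num), hQ]
  congr 1
  push_cast
  ring

lemma toSet_eq_pi (Q : DyadicCube n) :
    Q.toSet = Set.univ.pi fun i =>
      Set.Ico ((Q.k i : ℝ) * (2 : ℝ) ^ (-Q.j)) (((Q.k i : ℝ) + 1) * (2 : ℝ) ^ (-Q.j)) := by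
  ext x
  simp [toSet, Set.mem_pi]

lemma measurableSet_toSet (Q : DyadicCube n) : MeasurableSet Q.toSet := by
  rw [toSet_eq_pi]
  exact MeasurableSet.univ_pi fun _ => measurableSet_Ico

lemma volume_toSet (Q : DyadicCube n) : volume Q.toSet = Q.vol := by
  have side : ∀ i : Fin n, volume (Set.Ico ((Q.k i : ℝ) * (2 : ℝ) ^ (-Q.j))
      (((Q.k i : ℝ) + 1) * (2 : ℝ) ^ (-Q.j))) = ENNReal.ofReal ((2 : ℝ) ^ (-Q.j)) := by
    intro i
    rw [Real.volume_Ico]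
    ring_nf
  rw [toSet_eq_pi, volume_pi_pi]
  simp only [side, Finset.prod_const, Finset.card_univ, Fintype.card_fin]
  rw [vol, ENNReal.rpow_mul, ENNReal.rpow_natCast, ← Real.rpow_intCast,
    ← ENNReal.ofReal_rpow_of_pos two_pos]
  push_cast
  norm_num

lemma corner_mem_toSet (Q : DyadicCube n) :
    (fun i => (Q.k i : ℝ) * (2 : ℝ) ^ (-Q.j)) ∈ Q.toSet := fun i =>
  ⟨le_rfl, by nlinarith [zpow_pos (two_pos : (0 : ℝ) < 2) (-Q.j)]⟩

lemma injOn_j_setOf_mem (x : Fin n → ℝ) : Set.InjOn j {Q : DyadicCube n | x ∈ Q.toSet} := by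
  rintro ⟨j, k⟩ hx ⟨j', k'⟩ hx' (rfl : j = j')
  simp only [mk.injEq, true_and]
  funext i
  have side := zpow_pos (two_pos : (0 : ℝ) < 2) (-j)
  have lt₁ : (k i : ℝ) < k' i + 1 :=
    (mul_lt_mul_iff_of_pos_right side).mp ((hx i).1.trans_lt (hx' i).2)
  have lt₂ : (k' i : ℝ) < k i + 1 :=
    (mul_lt_mul_iff_of_pos_right side).mp ((hx' i).1.trans_lt (hx i).2)
  norm_cast at lt₁ lt₂
  omega

lemma j_le_of_toSet_subset (hn : 0 < n) {P Q : DyadicCube n} (h : Q.toSet ⊆ P.toSet) :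
    P.j ≤ Q.j := by
  have hwQ := zpow_pos (two_pos : (0 : ℝ) < 2) (-Q.j)
  set wQ := (2 : ℝ) ^ (-Q.j)
  set wP := (2 : ℝ) ^ (-P.j)
  let i₀ : Fin n := ⟨0, hn⟩
  -- the corner and the centre of `Q` both lie in `P`: half a side of `Q` is shorter than a
  -- side of `P`
  have centre : (fun i => (Q.k i : ℝ) * wQ + wQ / 2) ∈ Q.toSet := fun i =>
    ⟨by linarith, by nlinarith⟩
  have corner := h (corner_mem_toSet Q) i₀
  have centre' := h centre i₀
  have half_lt : (2 : ℝ) ^ (-Q.j - 1) < wP := by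
    rw [zpow_sub₀ two_ne_zero, zpow_one]
    nlinarith [corner.1, centre'.2]
  have := (zpow_lt_zpow_iff_right₀ (one_lt_two : (1 : ℝ) < 2)).mp half_lt
  omega

lemma ind_of_mem {Q : DyadicCube n} {x : Fin n → ℝ} (hx : x ∈ Q.toSet) : Q.ind x = 1 :=
  Set.indicator_of_mem hx _

lemma ind_of_notMem {Q : DyadicCube n} {x : Fin n → ℝ} (hx : x ∉ Q.toSet) : Q.ind x = 0 :=
  Set.indicator_of_notMem hx _

lemma ind_le_one (Q : DyadicCube n) (x : Fin n → ℝ) : Q.ind x ≤ 1 :=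
  Set.indicator_le_self' (fun _ _ => zero_le) x

lemma ind_rpow {a : ℝ} (ha : 0 < a) (Q : DyadicCube n) (x : Fin n → ℝ) :
    Q.ind x ^ a = Q.ind x := by
  by_cases hx : x ∈ Q.toSet
  · rw [ind_of_mem hx, ENNReal.one_rpow]
  · rw [ind_of_notMem hx, ENNReal.zero_rpow_of_pos ha]

lemma tsum_vol_rpow_mul_ind_le (hn : 0 < n) (P : DyadicCube n) (y : ℝ) (x : Fin n → ℝ) :
    ∑' Q : {Q : DyadicCube n // Q.toSet ⊆ P.toSet}, Q.1.vol ^ y * Q.1.ind x ≤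
      P.vol ^ y * (1 - (2 : ℝ≥0∞) ^ (-((n : ℝ) * y)))⁻¹ := by
  let T := {Q : {Q : DyadicCube n // Q.toSet ⊆ P.toSet} | x ∈ Q.1.toSet}
  have sum_eq : ∑' Q : {Q : DyadicCube n // Q.toSet ⊆ P.toSet}, Q.1.vol ^ y * Q.1.ind x =
      ∑' Q : T, Q.1.1.vol ^ y := by
    rw [tsum_subtype T fun Q => Q.1.vol ^ y]
    congr 1 with Q
    by_cases hx : x ∈ Q.1.toSet
    · simp [T, hx, ind_of_mem]
    · simp [T, hx, ind_of_notMem]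
  let depth : T → ℕ := fun Q => (Q.1.1.j - P.j).toNat
  have j_eq : ∀ Q : T, Q.1.1.j = P.j + depth Q := fun Q => by
    have := j_le_of_toSet_subset hn Q.1.2
    simp only [depth]
    omega
  have depth_inj : Function.Injective depth := fun Q Q' h =>
    Subtype.ext <| Subtype.ext <| injOn_j_setOf_mem x Q.2 Q'.2 <| by rw [j_eq Q, j_eq Q', h]
  calc _ = ∑' Q : T, P.vol ^ y * ((2 : ℝ≥0∞) ^ (-((n : ℝ) * y))) ^ depth Q := by
        rw [sum_eq]
        exact tsum_congr fun Q => vol_rpow_of_j_eq_add (j_eq Q) y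
    _ ≤ ∑' m : ℕ, P.vol ^ y * ((2 : ℝ≥0∞) ^ (-((n : ℝ) * y))) ^ m :=
        ENNReal.tsum_comp_le_tsum_of_injective depth_inj _
    _ = _ := by rw [ENNReal.tsum_mul_left, ENNReal.tsum_geometric]

end DyadicCube

variable {n : ℕ}

lemma coeff_add_mul (s d : ℝ) (Q : DyadicCube n) :
    coeff (s + n * d) Q = coeff s Q * Q.vol ^ (-d) := by
  rw [coeff, coeff, ← Q.vol_rpow_add]
  rcases eq_or_ne (n : ℝ) 0 with hn | hn
  · simp [vol, hn]
  · congr 1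
    field_simp
    ring

lemma cmoNorm_top_eq_supNorm (s r : ℝ) (t : DyadicCube n → ℂ) :
    cmoNorm n s ∞ r t = supNorm n s t := by
  simp only [cmoNorm, if_pos]
  apply le_antisymm
  · refine iSup_le fun P => iSup₂_le fun x _ => iSup_le fun Q => ?_
    calc coeff s Q.1 * ‖t Q.1‖₊ * Q.1.ind x ≤ coeff s Q.1 * ‖t Q.1‖₊ :=
          mul_le_of_le_one_right' (Q.1.ind_le_one x)
      _ ≤ supNorm n s t := le_iSup (fun Q => coeff s Q * (‖t Q‖₊ : ℝ≥0∞)) Q.1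
  · refine iSup_le fun Q => le_iSup_of_le Q <| le_iSup₂_of_le _ Q.corner_mem_toSet <|
      le_iSup_of_le ⟨Q, subset_rfl⟩ ?_
    rw [DyadicCube.ind_of_mem Q.corner_mem_toSet, mul_one]

section Finite

variable {q : ℝ≥0∞}

lemma supNorm_le_cmoNorm (hq : q ≠ ∞) (hq₀ : 0 < q) (s r : ℝ) (t : DyadicCube n → ℂ) :
    supNorm n (s + n * (r - 1) / q.toReal) t ≤ cmoNorm n s q r t := by
  set a := q.toReal
  have ha : 0 < a := ENNReal.toReal_pos hq₀.ne' hq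
  simp only [cmoNorm, if_neg hq]
  refine iSup_le fun Q => le_iSup_of_le Q ?_
  set c := coeff s Q * (‖t Q‖₊ : ℝ≥0∞)
  have integral_ge : c ^ a * Q.vol ≤ ∫⁻ x in Q.toSet,
      ∑' Q' : {Q' : DyadicCube n // Q'.toSet ⊆ Q.toSet},
        (coeff s Q'.1 * ‖t Q'.1‖₊ * Q'.1.ind x) ^ a := by
    rw [← Q.volume_toSet, ← setLIntegral_const]
    refine setLIntegral_mono' Q.measurableSet_toSet fun x hx => ?_
    refine le_of_eq_of_le ?_ (ENNReal.le_tsum ⟨Q, subset_rfl⟩)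
    rw [DyadicCube.ind_of_mem hx, mul_one]
  have normalized_eq : Q.vol ^ (-r) * (c ^ a * Q.vol) = (c * Q.vol ^ (-((r - 1) / a))) ^ a := by
    rw [ENNReal.mul_rpow_of_nonneg c _ ha.le, ← ENNReal.rpow_mul,
      show -((r - 1) / a) * a = -r + 1 by field_simp; ring, Q.vol_rpow_add, ENNReal.rpow_one]
    ring
  calc coeff (s + n * (r - 1) / a) Q * ‖t Q‖₊
        = (Q.vol ^ (-r) * (c ^ a * Q.vol)) ^ (1 / a) := by
        rw [normalized_eq, one_div, ENNReal.rpow_rpow_inv ha.ne', mul_div_assoc, coeff_add_mul,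
          mul_right_comm]
    _ ≤ _ := by gcongr

lemma rpow_coeff_mul_ind_le {a : ℝ} (ha : 0 < a) (s d : ℝ) (t : DyadicCube n → ℂ)
    (Q : DyadicCube n) (x : Fin n → ℝ) :
    (coeff s Q * ‖t Q‖₊ * Q.ind x) ^ a ≤
      supNorm n (s + n * d) t ^ a * (Q.vol ^ (d * a) * Q.ind x) := by
  have coeff_eq : coeff s Q = coeff (s + n * d) Q * Q.vol ^ d := by
    rw [coeff_add_mul, mul_assoc, Q.vol_rpow_neg_mul_rpow, mul_one]
  rw [ENNReal.mul_rpow_of_nonneg _ _ ha.le, Q.ind_rpow ha, coeff_eq, mul_right_comm,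
    ENNReal.mul_rpow_of_nonneg _ _ ha.le, ← ENNReal.rpow_mul, ← mul_assoc]
  gcongr
  exact le_iSup (fun Q => coeff (s + n * d) Q * (‖t Q‖₊ : ℝ≥0∞)) Q

lemma cmoNorm_le_supNorm (hn : 0 < n) (hq : q ≠ ∞) (hq₀ : 0 < q) (s r : ℝ)
    (t : DyadicCube n → ℂ) :
    cmoNorm n s q r t ≤ (1 - (2 : ℝ≥0∞) ^ (-((n : ℝ) * (r - 1))))⁻¹ ^ (1 / q.toReal) *
      supNorm n (s + n * (r - 1) / q.toReal) t := by
  set a := q.toReal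
  have ha : 0 < a := ENNReal.toReal_pos hq₀.ne' hq
  set C₀ := (1 - (2 : ℝ≥0∞) ^ (-((n : ℝ) * (r - 1))))⁻¹
  set M := supNorm n (s + n * (r - 1) / a) t
  simp only [cmoNorm, if_neg hq]
  refine iSup_le fun P => ?_
  have pointwise : ∀ x, ∑' Q : {Q : DyadicCube n // Q.toSet ⊆ P.toSet},
      (coeff s Q.1 * ‖t Q.1‖₊ * Q.1.ind x) ^ a ≤ M ^ a * (P.vol ^ (r - 1) * C₀) := by
    intro x
    calc _ ≤ ∑' Q : {Q : DyadicCube n // Q.toSet ⊆ P.toSet},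
          M ^ a * (Q.1.vol ^ (r - 1) * Q.1.ind x) := by
          refine ENNReal.tsum_le_tsum fun Q => ?_
          have := rpow_coeff_mul_ind_le ha s ((r - 1) / a) t Q.1 x
          rwa [div_mul_cancel₀ _ ha.ne', ← mul_div_assoc] at this
      _ = M ^ a * ∑' Q : {Q : DyadicCube n // Q.toSet ⊆ P.toSet},
          Q.1.vol ^ (r - 1) * Q.1.ind x := ENNReal.tsum_mul_left
      _ ≤ _ := by grw [P.tsum_vol_rpow_mul_ind_le hn (r - 1) x]
  have integral_le : ∫⁻ x in P.toSet, ∑' Q : {Q : DyadicCube n // Q.toSet ⊆ P.toSet},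
      (coeff s Q.1 * ‖t Q.1‖₊ * Q.1.ind x) ^ a ≤ M ^ a * C₀ * P.vol ^ r :=
    calc _ ≤ ∫⁻ _ in P.toSet, M ^ a * (P.vol ^ (r - 1) * C₀) := lintegral_mono pointwise
      _ = M ^ a * C₀ * (P.vol ^ (r - 1) * P.vol ^ (1 : ℝ)) := by
          rw [setLIntegral_const, P.volume_toSet, ENNReal.rpow_one]
          ring
      _ = M ^ a * C₀ * P.vol ^ r := by rw [← P.vol_rpow_add, sub_add_cancel]
  calc _ ≤ (P.vol ^ (-r) * (M ^ a * C₀ * P.vol ^ r)) ^ (1 / a) := by gcongr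
    _ = C₀ ^ (1 / a) * M := by
        rw [mul_comm, mul_assoc, mul_comm (P.vol ^ r), P.vol_rpow_neg_mul_rpow, mul_one,
          ENNReal.mul_rpow_of_nonneg _ _ (by positivity), one_div, ENNReal.rpow_rpow_inv ha.ne',
          mul_comm]

end Finite

/-- for `s ∈ ℝ` and either `q ∈ (0,∞)` with `r > 1`, or `q = ∞` with
`r ≥ 1`, the norm `‖t‖_{cmo^{s,q}_r}` is equivalent to
`sup_Q |Q|^{-s/n-(r-1)/q-1/2} |t_Q|`; that is, `cmo^{s,q}_r = ḟ^{s+n(r-1)/q}_{∞,∞}`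
with equivalent norms. -/
theorem stmt13 (n : ℕ) (hn : 0 < n) (s r : ℝ) (q : ℝ≥0∞)
    (h : (q ≠ ∞ ∧ 0 < q ∧ 1 < r) ∨ (q = ∞ ∧ 1 ≤ r)) :
    ∃ c C : ℝ≥0∞, 0 < c ∧ C ≠ ∞ ∧ ∀ t : DyadicCube n → ℂ,
      c * supNorm n (s + n * (r - 1) / q.toReal) t ≤ cmoNorm n s q r t ∧
      cmoNorm n s q r t ≤ C * supNorm n (s + n * (r - 1) / q.toReal) t := by
  rcases h with ⟨hq, hq₀, hr⟩ | ⟨rfl, -⟩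
  · have ratio_lt_one : (2 : ℝ≥0∞) ^ (-((n : ℝ) * (r - 1))) < 1 :=
      ENNReal.rpow_lt_one_of_one_lt_of_neg ENNReal.one_lt_two
        (neg_neg_of_pos (mul_pos (Nat.cast_pos.2 hn) (sub_pos.2 hr)))
    refine ⟨1, (1 - (2 : ℝ≥0∞) ^ (-((n : ℝ) * (r - 1))))⁻¹ ^ (1 / q.toReal), one_pos,
      ENNReal.rpow_ne_top_of_nonneg (by positivity)
      (ENNReal.inv_ne_top.2 (tsub_pos_of_lt ratio_lt_one).ne'), fun t => ?_⟩
    rw [one_mul]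
    exact ⟨supNorm_le_cmoNorm hq hq₀ s r t, cmoNorm_le_supNorm hn hq hq₀ s r t⟩
  · refine ⟨1, 1, one_pos, one_ne_top, fun t => ?_⟩
    simp [cmoNorm_top_eq_supNorm]
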